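/- Let x be a string over an alphabet Σ not containing the symbol 7, and let y = 7^{|x|} ++ y2 ++ 7^{|x|} where y2 is a string over Σ. Then δ(x,y) = min over all ordered partitions x = x1 ++ x2 ++ x3 of (δ(x1, 7^{|x|}) + δ(x2, y2) + δ(x3, 7^{|x|})). -/

import Mathlib

/-- Levenshtein cost structure, as in the Mathlib of December 2024
(`Mathlib/Data/List/EditDistance/Defs.lean`, since removed from Mathlib). -/
structure Levenshtein.Cost (α β δ : Type*) where
  delete : α → δ
  insert : β → δ
  substitute : α → β → δ

def Levenshtein.defaultCost {α : Type*} [DecidableEq α] : Levenshtein.Cost α α ℕ where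
  delete _ := 1
  insert _ := 1
  substitute a b := if a = b then 0 else 1

def Levenshtein.impl {α β δ : Type*} [AddZeroClass δ] [Min δ]
    (C : Levenshtein.Cost α β δ) (xs : List α) (y : β) (d : {r : List δ // 0 < r.length}) :
    {r : List δ // 0 < r.length} :=
  let ⟨ds, w⟩ := d
  xs.zip (ds.zip ds.tail) |>.foldr
    (init := ⟨[C.insert y + ds.getLast (List.length_pos_iff.mp w)], by simp⟩)
    (fun ⟨x, d₀, d₁⟩ ⟨r, w⟩ =>
      ⟨min (C.delete x + r[0]) (min (C.insert y + d₀) (C.substitute x y + d₁)) :: r, by simp⟩)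

def suffixLevenshtein {α β δ : Type*} [AddZeroClass δ] [Min δ]
    (C : Levenshtein.Cost α β δ) (xs : List α) (ys : List β) :
    {r : List δ // 0 < r.length} :=
  ys.foldr
    (Levenshtein.impl C xs)
    (xs.foldr (init := ⟨[0], by simp⟩) (fun a ⟨r, w⟩ => ⟨(C.delete a + r[0]) :: r, by simp⟩))

def levenshtein {α β δ : Type*} [AddZeroClass δ] [Min δ]
    (C : Levenshtein.Cost α β δ) (xs : List α) (ys : List β) : δ :=
  let ⟨r, w⟩ := suffixLevenshtein C xs ys
  r[0]

/-- Unit-cost edit distance between two lists over a decidable-eq alphabet. -/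
def editDist (a b : List ℕ) : ℕ :=
  levenshtein Levenshtein.defaultCost a b

/-!
Splitting the target as `u ++ v`, an optimal alignment of `x` with `u ++ v` cuts `x` at the
point aligned with the block boundary, so `δ(x, u ++ v)` is at least `δ(x₁, u) + δ(x₂, v)` for
some split `x = x₁ ++ x₂`; conversely, alignments of the pieces concatenate, so it is at most
that sum for every split. Both facts are inductions along the Levenshtein recursion, and the
three-block identity follows by splitting twice.
-/

theorem List.getLast_tails {α : Type*} (xs : List α) (h) : xs.tails.getLast h = [] := by
  induction xs with
  | nil => rfl
  | cons a xs ih => rw [List.getLast_congr _ (by simp) (List.tails_cons a xs),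
      List.getLast_cons (by cases xs <;> simp), ih]

section Recursion

variable {α β δ : Type*} [AddZeroClass δ] [Min δ] (C : Levenshtein.Cost α β δ)

/-- `suffixLevenshtein C xs ys` is the dynamic-programming table of this recursion, listing its
values at the suffixes of `xs`. -/
def levenshteinRec : List α → List β → δ
  | [], [] => 0
  | [], y :: ys => C.insert y + levenshteinRec [] ys
  | x :: xs, [] => C.delete x + levenshteinRec xs []
  | x :: xs, y :: ys =>
    min (C.delete x + levenshteinRec xs (y :: ys))
      (min (C.insert y + levenshteinRec (x :: xs) ys) (C.substitute x y + levenshteinRec xs ys))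

theorem suffixLevenshtein_nil_right (xs : List α) :
    (suffixLevenshtein C xs []).1 = xs.tails.map (levenshteinRec C · []) := by
  induction xs with
  | nil => simp [suffixLevenshtein, levenshteinRec]
  | cons a xs ih =>
    simp only [suffixLevenshtein, List.foldr_nil, List.foldr_cons] at ih ⊢
    generalize List.foldr _ _ xs = R at ih ⊢
    obtain ⟨r, _⟩ := R
    subst ih
    cases xs <;> simp [levenshteinRec]

theorem levenshtein_impl_tails (y : β) (ys : List β) (xs : List α) (h) :
    (Levenshtein.impl C xs y ⟨xs.tails.map (levenshteinRec C · ys), h⟩).1 =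
      xs.tails.map (levenshteinRec C · (y :: ys)) := by
  simp only [Levenshtein.impl, List.getLast_map, List.getLast_tails]
  induction xs with
  | nil => simp [levenshteinRec]
  | cons a xs ih =>
    specialize ih (by simp)
    cases xs with
    | nil => simp [levenshteinRec]
    | cons b xs =>
      simp only [List.tails_cons, List.map_cons, List.tail_cons, List.zip_cons_cons,
        List.foldr_cons] at ih ⊢
      simp [ih, levenshteinRec]

theorem suffixLevenshtein_eq_tails_map (xs : List α) (ys : List β) :
    (suffixLevenshtein C xs ys).1 = xs.tails.map (levenshteinRec C · ys) := by
  induction ys with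
  | nil => exact suffixLevenshtein_nil_right C xs
  | cons y ys ih =>
    change (Levenshtein.impl C xs y (suffixLevenshtein C xs ys)).1 = _
    rw [← levenshtein_impl_tails C y ys xs (by simp)]
    congr 2
    exact Subtype.ext ih

theorem levenshtein_eq_levenshteinRec (xs : List α) (ys : List β) :
    levenshtein C xs ys = levenshteinRec C xs ys := by
  have h := suffixLevenshtein_eq_tails_map C xs ys
  unfold levenshtein
  generalize suffixLevenshtein C xs ys = R at h ⊢
  obtain ⟨r, _⟩ := R
  subst h
  cases xs <;> rfl

@[simp]
theorem levenshtein_nil_nil : levenshtein C [] [] = 0 := by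
  simp [levenshtein_eq_levenshteinRec, levenshteinRec]

@[simp]
theorem levenshtein_nil_cons (y : β) (ys : List β) :
    levenshtein C [] (y :: ys) = C.insert y + levenshtein C [] ys := by
  simp only [levenshtein_eq_levenshteinRec, levenshteinRec]

@[simp]
theorem levenshtein_cons_nil (x : α) (xs : List α) :
    levenshtein C (x :: xs) [] = C.delete x + levenshtein C xs [] := by
  simp only [levenshtein_eq_levenshteinRec, levenshteinRec]

theorem levenshtein_cons_cons (x : α) (xs : List α) (y : β) (ys : List β) :
    levenshtein C (x :: xs) (y :: ys) =
      min (C.delete x + levenshtein C xs (y :: ys))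
        (min (C.insert y + levenshtein C (x :: xs) ys) (C.substitute x y + levenshtein C xs ys)) := by
  simp only [levenshtein_eq_levenshteinRec, levenshteinRec]

end Recursion

section NatCost

variable {α β : Type*} (C : Levenshtein.Cost α β ℕ)

theorem levenshtein_nil_left (ys : List β) : levenshtein C [] ys = (ys.map C.insert).sum := by
  induction ys with
  | nil => simp
  | cons y ys ih => simp [ih]

theorem levenshtein_cons_left_le (a : α) (xs : List α) (ys : List β) :
    levenshtein C (a :: xs) ys ≤ C.delete a + levenshtein C xs ys := by
  cases ys with
  | nil => simp
  | cons b ys => rw [levenshtein_cons_cons]; exact min_le_left _ _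

theorem levenshtein_cons_right_le (xs : List α) (b : β) (ys : List β) :
    levenshtein C xs (b :: ys) ≤ C.insert b + levenshtein C xs ys := by
  cases xs with
  | nil => simp
  | cons a xs => rw [levenshtein_cons_cons]; exact min_le_of_right_le (min_le_left _ _)

theorem levenshtein_cons_cons_le (a : α) (xs : List α) (b : β) (ys : List β) :
    levenshtein C (a :: xs) (b :: ys) ≤ C.substitute a b + levenshtein C xs ys := by
  rw [levenshtein_cons_cons]; exact min_le_of_right_le (min_le_right _ _)

theorem levenshtein_append_le (x₁ x₂ : List α) (u v : List β) :
    levenshtein C (x₁ ++ x₂) (u ++ v) ≤ levenshtein C x₁ u + levenshtein C x₂ v := by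
  induction x₁ generalizing u with
  | nil =>
    induction u with
    | nil => simp
    | cons b u ih =>
      simp only [List.nil_append, List.cons_append, levenshtein_nil_cons] at ih ⊢
      have := levenshtein_cons_right_le C x₂ b (u ++ v)
      omega
  | cons a x₁ ih =>
    induction u with
    | nil =>
      have hdel := ih []
      simp only [List.nil_append, List.cons_append, levenshtein_cons_nil] at hdel ⊢
      have := levenshtein_cons_left_le C a (x₁ ++ x₂) v
      omega
    | cons b u ihu =>
      have hdel := ih (b :: u)
      have hsub := ih u
      simp only [List.cons_append] at hdel ihu ⊢
      rw [levenshtein_cons_cons C a x₁, ← min_add_add_right, ← min_add_add_right]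
      refine le_min ?_ (le_min ?_ ?_)
      · exact (levenshtein_cons_left_le C _ _ _).trans (by omega)
      · exact (levenshtein_cons_right_le C _ _ _).trans (by omega)
      · exact (levenshtein_cons_cons_le C _ _ _ _).trans (by omega)

theorem exists_append_eq_levenshtein_add_le (x : List α) (u v : List β) :
    ∃ x₁ x₂, x = x₁ ++ x₂ ∧ levenshtein C x₁ u + levenshtein C x₂ v ≤ levenshtein C x (u ++ v) := by
  induction x generalizing u with
  | nil => exact ⟨[], [], rfl, by simp [levenshtein_nil_left]⟩
  | cons a x ih =>
    induction u with
    | nil => exact ⟨[], a :: x, rfl, by simp⟩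
    | cons b u ihu =>
      rw [List.cons_append, levenshtein_cons_cons]
      rcases min_choice (C.delete a + levenshtein C x (b :: (u ++ v)))
        (min (C.insert b + levenshtein C (a :: x) (u ++ v))
          (C.substitute a b + levenshtein C x (u ++ v))) with hdel | hmin
      · obtain ⟨x₁, x₂, rfl, h⟩ := ih (b :: u)
        refine ⟨a :: x₁, x₂, rfl, ?_⟩
        have := levenshtein_cons_left_le C a x₁ (b :: u)
        simp only [List.cons_append] at h
        omega
      rw [hmin]
      rcases min_choice (C.insert b + levenshtein C (a :: x) (u ++ v))
          (C.substitute a b + levenshtein C x (u ++ v)) with hins | hsub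
      · obtain ⟨x₁, x₂, hx, h⟩ := ihu
        refine ⟨x₁, x₂, hx, ?_⟩
        have := levenshtein_cons_right_le C x₁ b u
        omega
      · obtain ⟨x₁, x₂, rfl, h⟩ := ih u
        refine ⟨a :: x₁, x₂, rfl, ?_⟩
        have := levenshtein_cons_cons_le C a x₁ b u
        omega

theorem levenshtein_append_append_eq_sInf (x : List α) (u v w : List β) :
    levenshtein C x (u ++ v ++ w) =
      sInf { c : ℕ | ∃ x₁ x₂ x₃ : List α, x = x₁ ++ x₂ ++ x₃ ∧
        c = levenshtein C x₁ u + levenshtein C x₂ v + levenshtein C x₃ w } := by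
  apply le_antisymm
  · refine le_csInf ⟨_, ⟨x, [], [], by simp, rfl⟩⟩ ?_
    rintro _ ⟨x₁, x₂, x₃, rfl, rfl⟩
    have := levenshtein_append_le C x₁ x₂ u v
    have := levenshtein_append_le C (x₁ ++ x₂) x₃ (u ++ v) w
    omega
  · obtain ⟨y, x₃, rfl, h₃⟩ := exists_append_eq_levenshtein_add_le C x (u ++ v) w
    obtain ⟨x₁, x₂, rfl, h₁₂⟩ := exists_append_eq_levenshtein_add_le C y u v
    calc sInf _ ≤ levenshtein C x₁ u + levenshtein C x₂ v + levenshtein C x₃ w :=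
          Nat.sInf_le (by exact ⟨x₁, x₂, x₃, rfl, rfl⟩)
      _ ≤ _ := by omega

end NatCost

theorem editDist_three_partition_general
    (x y2 : List ℕ) :
    editDist x (List.replicate x.length 7 ++ y2 ++ List.replicate x.length 7) =
      sInf { c : ℕ | ∃ x1 x2 x3 : List ℕ, x = x1 ++ x2 ++ x3 ∧
        c = editDist x1 (List.replicate x.length 7) + editDist x2 y2 +
            editDist x3 (List.replicate x.length 7) } :=
  levenshtein_append_append_eq_sInf _ _ _ _ _

/-- If `7` occurs neither in `x` nor in `y2`, and
`y = 7^{|x|} ++ y2 ++ 7^{|x|}`, then `δ(x,y)` is the minimum over ordered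
partitions `x = x1 ++ x2 ++ x3` of
`δ(x1,7^{|x|}) + δ(x2,y2) + δ(x3,7^{|x|})`. -/
theorem editDist_three_partition
    (x y2 : List ℕ)
    (hx : ∀ c ∈ x, c ≠ 7) (hy2 : ∀ c ∈ y2, c ≠ 7) :
    editDist x (List.replicate x.length 7 ++ y2 ++ List.replicate x.length 7) =
      sInf { c : ℕ | ∃ x1 x2 x3 : List ℕ, x = x1 ++ x2 ++ x3 ∧
        c = editDist x1 (List.replicate x.length 7) + editDist x2 y2 +
            editDist x3 (List.replicate x.length 7) } :=
  editDist_three_partition_general x y2
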